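/- Let 0 < ζ < 1 and T^0 < T^l < T^u. The per-slot cooling decrement d(T^0) = (T^u − T^0)(1 − ζ^{K(T^0)})/K(T^0), where K(T^0) = log((T^l − T^0)/(T^u − T^0))/log ζ, is a strictly decreasing function of the ambient temperature T^0 on (−∞, T^l). -/

import Mathlib

/-!
With `r(T⁰) = (Tˡ - T⁰) / (Tᵘ - T⁰)` we have `ζ ^ K(T⁰) = r(T⁰)`, so the decrement collapses to
`(Tᵘ - Tˡ) · log ζ / log r(T⁰)`, a negative constant divided by `log r(T⁰) < 0`. As `T⁰` increases
to `Tˡ`, `r = 1 - (Tᵘ - Tˡ) / (Tᵘ - T⁰)` decreases inside `(0, 1)`, so `|log r|` grows and the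
quotient falls.
-/

open Real Set

lemma strictMonoOn_div_left_of_neg {c : ℝ} (hc : c < 0) :
    StrictMonoOn (fun x : ℝ => c / x) (Iio 0) := fun x _ y hy hxy => by
  show c / x < c / y
  rw [← neg_div_neg_eq c x, ← neg_div_neg_eq c y]
  exact div_lt_div_of_pos_left (neg_pos.2 hc) (neg_pos.2 hy) (neg_lt_neg hxy)

lemma strictAntiOn_sub_div_sub {a b : ℝ} (hab : a < b) :
    StrictAntiOn (fun t : ℝ => (a - t) / (b - t)) (Iio b) := fun x hx y hy hxy => by
  have hx' : 0 < b - x := sub_pos.2 hx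
  have hy' : 0 < b - y := sub_pos.2 hy
  show (a - y) / (b - y) < (a - x) / (b - x)
  rw [div_lt_div_iff₀ hy' hx']
  nlinarith

lemma sub_div_sub_mem_Ioo {a b t : ℝ} (hab : a < b) (hta : t < a) :
    (a - t) / (b - t) ∈ Ioo 0 1 :=
  ⟨div_pos (sub_pos.2 hta) (by linarith), (div_lt_one (by linarith)).2 (by linarith)⟩

lemma mul_one_sub_rpow_div_eq {ζ x y : ℝ} (hζ0 : 0 < ζ) (hζ1 : ζ ≠ 1) (hxy : 0 < x / y) :
    y * (1 - ζ ^ (log (x / y) / log ζ)) / (log (x / y) / log ζ)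
      = (y - x) * log ζ / log (x / y) := by
  have hy : y ≠ 0 := by rintro rfl; simp at hxy
  rw [log_div_log, rpow_logb hζ0 hζ1 hxy, ← log_div_log, div_div_eq_mul_div]
  congr 2
  field_simp

theorem cooling_decrement_strict_anti
    (ζ Tl Tu : ℝ) (hζ0 : 0 < ζ) (hζ1 : ζ < 1) (hlu : Tl < Tu) :
    StrictAntiOn
      (fun T0 : ℝ =>
        (Tu - T0) * (1 - ζ ^ (Real.log ((Tl - T0) / (Tu - T0)) / Real.log ζ)) /
          (Real.log ((Tl - T0) / (Tu - T0)) / Real.log ζ))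
      (Set.Iio Tl) := by
  have hratio_mem : ∀ T0 ∈ Iio Tl, (Tl - T0) / (Tu - T0) ∈ Ioo 0 1 :=
    fun T0 hT0 => sub_div_sub_mem_Ioo hlu hT0
  have hlog_ratio : StrictAntiOn (fun T0 => log ((Tl - T0) / (Tu - T0))) (Iio Tl) :=
    strictMonoOn_log.comp_strictAntiOn
      ((strictAntiOn_sub_div_sub hlu).mono (Iio_subset_Iio hlu.le))
      fun T0 hT0 => (hratio_mem T0 hT0).1
  have hc : (Tu - Tl) * log ζ < 0 := mul_neg_of_pos_of_neg (sub_pos.2 hlu) (log_neg hζ0 hζ1)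
  refine ((strictMonoOn_div_left_of_neg hc).comp_strictAntiOn hlog_ratio
    fun T0 hT0 => log_neg (hratio_mem T0 hT0).1 (hratio_mem T0 hT0).2).congr fun T0 hT0 => ?_
  simp only [Function.comp_apply]
  rw [mul_one_sub_rpow_div_eq hζ0 hζ1.ne (hratio_mem T0 hT0).1, sub_sub_sub_cancel_right]
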